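/- (Hilbert's second identity.) Let n, k : ℕ, let m : ℕ with m ≤ nk, let λ = (λ_1 ≥ ⋯ ≥ λ_k ≥ 0) be a partition of m with λ_1 ≤ n, and set c = nk − 2m ∈ ℤ. Then for every i ≥ 1, D^i(Δ(a_λ)) − Δ(D^i(a_λ)) = i·(c + i − 1) · D^{i-1}(a_λ), where the scalar i·(c + i − 1) is taken in ℚ via the cast from ℤ. -/

import Mathlib

open MvPolynomial

/-- The operator `D(I) = Σ_{i=1}^{n} i · a_{i-1} · ∂I/∂a_i`. -/
noncomputable def Dop (n : ℕ) :
    MvPolynomial (Fin (n+1)) ℚ →ₗ[ℚ] MvPolynomial (Fin (n+1)) ℚ :=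
  ∑ i : Fin n, ((i : ℚ) + 1) •
    ((LinearMap.mulLeft ℚ (X i.castSucc)).comp (pderiv i.succ).toLinearMap)

/-- The operator `Δ(I) = Σ_{i=0}^{n-1} (n-i) · a_{i+1} · ∂I/∂a_i`. -/
noncomputable def Δop (n : ℕ) :
    MvPolynomial (Fin (n+1)) ℚ →ₗ[ℚ] MvPolynomial (Fin (n+1)) ℚ :=
  ∑ i : Fin n, ((n : ℚ) - (i : ℚ)) •
    ((LinearMap.mulLeft ℚ (X i.succ)).comp (pderiv i.castSucc).toLinearMap)

/-- `Q_n(k,m)`: span of monomials of degree `k` and weight `m`. -/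
noncomputable def Qspace (n k m : ℕ) : Submodule ℚ (MvPolynomial (Fin (n+1)) ℚ) :=
  Submodule.span ℚ { p | ∃ ν : Fin (n+1) →₀ ℕ,
    (∑ i : Fin (n+1), ν i) = k ∧ (∑ i : Fin (n+1), (i : ℕ) * ν i) = m ∧ p = monomial ν (1 : ℚ) }

/-- `S_n(k,m)`: semi-invariants of degree `k` and weight `m`. -/
noncomputable def Sspace (n k m : ℕ) : Submodule ℚ (MvPolynomial (Fin (n+1)) ℚ) :=
  Qspace n k m ⊓ LinearMap.ker (Dop n)

/-- `p(k,n,m)`: number of partitions of `m` in a `k × n` rectangle. -/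
def pRect (k n m : ℕ) : ℕ :=
  (Finset.univ.filter
    (fun P : Nat.Partition m => Multiset.card P.parts ≤ k ∧ ∀ x ∈ P.parts, x ≤ n)).card

/-- Coefficient embedding `ℚ[a] → ℚ[z][a]`. -/
noncomputable def ιmap (n : ℕ) :
    MvPolynomial (Fin (n+1)) ℚ →+* MvPolynomial (Fin (n+1)) (Polynomial ℚ) :=
  MvPolynomial.map (Polynomial.C)

/-- The shear substitution `a_i ↦ a_i' = Σ_{j=0}^{i} C(i,j) a_{i-j} z^j`. -/
noncomputable def φmap (n : ℕ) :
    MvPolynomial (Fin (n+1)) ℚ →ₐ[ℚ] MvPolynomial (Fin (n+1)) (Polynomial ℚ) :=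
  aeval (fun i : Fin (n+1) => ∑ j ∈ Finset.range ((i : ℕ) + 1),
    (C ((Nat.choose (i : ℕ) j : Polynomial ℚ) * Polynomial.X ^ j)) *
      X (⟨(i : ℕ) - j, Nat.lt_of_le_of_lt (Nat.sub_le _ _) i.isLt⟩ : Fin (n+1)))

/-- The vertical shear substitution `a_i ↦ a_i'' = Σ_{j=0}^{n-i} C(n-i,j) a_{i+j} z^j`. -/
noncomputable def ψmap (n : ℕ) :
    MvPolynomial (Fin (n+1)) ℚ →ₐ[ℚ] MvPolynomial (Fin (n+1)) (Polynomial ℚ) :=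
  aeval (fun i : Fin (n+1) => ∑ j ∈ (Finset.range (n - (i : ℕ) + 1)).attach,
    (C ((Nat.choose (n - (i : ℕ)) j.1 : Polynomial ℚ) * Polynomial.X ^ j.1)) *
      X (⟨(i : ℕ) + j.1, by
        have h1 := Finset.mem_range.mp j.2
        have h2 := i.isLt
        omega⟩ : Fin (n+1)))

/-- The weighted total degree of `I`: max of `Σ_i i·ν_i` over monomials of `I`. -/
def wdeg (n : ℕ) (I : MvPolynomial (Fin (n+1)) ℚ) : ℕ :=
  I.support.sup (fun ν => ∑ i : Fin (n+1), (i : ℕ) * ν i)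

/-!
`D`, `Δ` and the weight derivation `H`, `H a_s = (n - 2s) a_s`, are derivations of `R`, and
checking on the generators gives the `sl₂` relations `[D, Δ] = H` and `[H, D] = 2D`. In any
ring these two relations give `D^{i+1} Δ - Δ D^{i+1} = (i+1) D^i (H + i)`
by induction on `i`, and `a_λ` is an `H`-eigenvector with eigenvalue `Σ_j (n - 2λ_j) = nk - 2m`.
-/

theorem Derivation.sum_apply {R A M ι : Type*} [CommSemiring R] [CommSemiring A]
    [AddCommMonoid M] [Algebra R A] [Module A M] [Module R M]
    (s : Finset ι) (f : ι → Derivation R A M) (a : A) :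
    (∑ i ∈ s, f i) a = ∑ i ∈ s, f i a := by
  rw [← Derivation.coeFnAddMonoidHom_apply, map_sum, Finset.sum_apply]
  rfl

theorem Derivation.map_prod_of_map_eq_smul {R A ι : Type*} [CommSemiring R] [CommSemiring A]
    [Algebra R A] (d : Derivation R A A) (s : Finset ι) (x : ι → A) (w : ι → R)
    (h : ∀ j ∈ s, d (x j) = w j • x j) :
    d (∏ j ∈ s, x j) = (∑ j ∈ s, w j) • ∏ j ∈ s, x j := by
  classical
  induction s using Finset.induction_on with
  | empty => simp
  | insert a s ha ih =>
    rw [Finset.prod_insert ha, Finset.sum_insert ha, Derivation.leibniz,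
      ih fun j hj => h j (Finset.mem_insert_of_mem hj), h a (Finset.mem_insert_self a s),
      smul_eq_mul, smul_eq_mul, mul_smul_comm, mul_smul_comm, mul_comm _ (x a), add_smul,
      add_comm]

section Sl2

variable {A : Type*} [Ring A] {D Δ H : A}

theorem mul_pow_eq_pow_mul_add (hHD : H * D = D * H + 2 • D) (r : ℕ) :
    H * D ^ r = D ^ r * H + (2 * r) • D ^ r := by
  induction r with
  | zero => simp
  | succ r ih =>
    calc H * D ^ (r + 1) = D ^ r * (H * D) + (2 * r) • D ^ (r + 1) := by
          rw [pow_succ, ← mul_assoc, ih, add_mul, smul_mul_assoc, mul_assoc]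
      _ = D ^ (r + 1) * H + (2 * (r + 1)) • D ^ (r + 1) := by
          rw [hHD, mul_add, ← mul_assoc, ← pow_succ, mul_smul_comm, ← pow_succ]
          module

theorem pow_succ_mul_sub_mul_pow_succ (hDΔ : D * Δ - Δ * D = H) (hHD : H * D = D * H + 2 • D)
    (i : ℕ) : D ^ (i + 1) * Δ - Δ * D ^ (i + 1) = (i + 1) • (D ^ i * H + i • D ^ i) := by
  induction i with
  | zero => simpa using hDΔ
  | succ i ih =>
    calc D ^ (i + 2) * Δ - Δ * D ^ (i + 2)
        = D * (D ^ (i + 1) * Δ - Δ * D ^ (i + 1)) + (D * Δ - Δ * D) * D ^ (i + 1) := by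
          rw [pow_succ' D (i + 1)]
          noncomm_ring
      _ = (i + 1) • (D ^ (i + 1) * H + i • D ^ (i + 1)) + H * D ^ (i + 1) := by
          rw [ih, hDΔ, mul_smul_comm, mul_add, mul_smul_comm, ← mul_assoc, ← pow_succ']
      _ = (i + 1 + 1) • (D ^ (i + 1) * H + (i + 1) • D ^ (i + 1)) := by
          rw [mul_pow_eq_pow_mul_add hHD]
          module

theorem Module.End.pow_succ_apply_sub_apply_pow_succ {R V : Type*} [CommRing R]
    [AddCommGroup V] [Module R V] {D Δ H : Module.End R V} (hDΔ : D * Δ - Δ * D = H)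
    (hHD : H * D = D * H + 2 • D) {v : V} {c : R} (hv : H v = c • v) (i : ℕ) :
    (D ^ (i + 1)) (Δ v) - Δ ((D ^ (i + 1)) v) = ((i + 1) * (c + i)) • (D ^ i) v := by
  have h := LinearMap.congr_fun (pow_succ_mul_sub_mul_pow_succ hDΔ hHD i) v
  rw [LinearMap.sub_apply, Module.End.mul_apply, Module.End.mul_apply] at h
  rw [h, LinearMap.smul_apply, LinearMap.add_apply, Module.End.mul_apply, hv,
    LinearMap.map_smul, LinearMap.smul_apply]
  module

end Sl2

namespace Fin

variable {n : ℕ} {R : Type*} [Ring R]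

theorem sub_mul_val_add_one (s : Fin (n + 1)) :
    ((n : R) - (s : ℕ)) * ((s + 1 : Fin (n + 1)) : ℕ) = (n - (s : ℕ)) * ((s : ℕ) + 1) := by
  by_cases h : s = Fin.last n
  · simp [h]
  · rw [Fin.val_add_one_of_lt (lt_of_le_of_ne (Fin.le_last s) h)]
    push_cast
    rfl

theorem val_mul_val_sub_one (s : Fin (n + 1)) :
    ((s : ℕ) : R) * ((s - 1 : Fin (n + 1)) : ℕ) = (s : ℕ) * ((s : ℕ) - 1) := by
  by_cases h : s = 0
  · simp [h]
  · rw [Fin.val_sub_one_of_ne_zero h,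
      Nat.cast_pred (Nat.pos_of_ne_zero (Fin.val_ne_zero_iff.mpr h))]

end Fin

noncomputable abbrev CoeffRing (n : ℕ) := MvPolynomial (Fin (n + 1)) ℚ

noncomputable def Dder (n : ℕ) : Derivation ℚ (CoeffRing n) (CoeffRing n) :=
  ∑ i : Fin n, ((i : ℚ) + 1) • ((X i.castSucc : CoeffRing n) • pderiv i.succ)

noncomputable def Δder (n : ℕ) : Derivation ℚ (CoeffRing n) (CoeffRing n) :=
  ∑ i : Fin n, ((n : ℚ) - (i : ℚ)) • ((X i.succ : CoeffRing n) • pderiv i.castSucc)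

noncomputable def Hder (n : ℕ) : Derivation ℚ (CoeffRing n) (CoeffRing n) :=
  mkDerivation ℚ fun s : Fin (n + 1) => ((n : ℚ) - 2 * (s : ℕ)) • X s

section Derivations

variable {n : ℕ}

theorem coe_Dder : (Dder n : Module.End ℚ (CoeffRing n)) = Dop n := by
  refine LinearMap.ext fun p => ?_
  simp only [Dder, Dop, Derivation.coeFn_coe, Derivation.sum_apply, LinearMap.sum_apply]
  rfl

theorem coe_Δder : (Δder n : Module.End ℚ (CoeffRing n)) = Δop n := by
  refine LinearMap.ext fun p => ?_
  simp only [Δder, Δop, Derivation.coeFn_coe, Derivation.sum_apply, LinearMap.sum_apply]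
  rfl

-- The wrap-around of `s - 1` at `s = 0` here, and of `s + 1` at `s = n` in `Δder_X`, is
-- harmless: the coefficient vanishes there.
theorem Dder_X (s : Fin (n + 1)) : Dder n (X s) = ((s : ℕ) : ℚ) • X (s - 1) := by
  simp only [Dder, Derivation.sum_apply, Derivation.smul_apply, pderiv_X, Pi.single_apply]
  induction s using Fin.cases with
  | zero => simp [(Fin.succ_ne_zero _).symm]
  | succ j =>
    simp only [Fin.succ_inj, smul_eq_mul, mul_ite, mul_one, mul_zero, smul_ite, smul_zero,
      Finset.sum_ite_eq, Finset.mem_univ, ↓reduceIte, Fin.val_succ, Nat.cast_add, Nat.cast_one]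
    rw [← Fin.coeSucc_eq_succ, add_sub_cancel_right]

theorem Δder_X (s : Fin (n + 1)) : Δder n (X s) = ((n : ℚ) - (s : ℕ)) • X (s + 1) := by
  simp only [Δder, Derivation.sum_apply, Derivation.smul_apply, pderiv_X, Pi.single_apply]
  induction s using Fin.lastCases with
  | last => simp [(Fin.castSucc_lt_last _).ne']
  | cast j => simp [Fin.castSucc_inj, Fin.coeSucc_eq_succ]

theorem Hder_X (s : Fin (n + 1)) : Hder n (X s) = ((n : ℚ) - 2 * (s : ℕ)) • X s :=
  mkDerivation_X _ _ _

theorem Hder_prod_X {ι : Type*} (s : Finset ι) (v : ι → Fin (n + 1)) :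
    Hder n (∏ j ∈ s, X (v j)) = (∑ j ∈ s, ((n : ℚ) - 2 * (v j : ℕ))) • ∏ j ∈ s, X (v j) :=
  Derivation.map_prod_of_map_eq_smul _ _ _ _ fun j _ => Hder_X (v j)

theorem commutator_Dder_Δder : ⁅Dder n, Δder n⁆ = Hder n := by
  refine derivation_ext fun s => ?_
  rw [Derivation.commutator_apply, Δder_X, Dder_X, Derivation.map_smul, Derivation.map_smul,
    Dder_X, Δder_X, Hder_X, add_sub_cancel_right, sub_add_cancel, smul_smul, smul_smul,
    ← sub_smul]
  congr 1
  linear_combination Fin.sub_mul_val_add_one (R := ℚ) s + Fin.val_mul_val_sub_one (R := ℚ) s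

theorem commutator_Hder_Dder : ⁅Hder n, Dder n⁆ = 2 • Dder n := by
  refine derivation_ext fun s => ?_
  rw [Derivation.commutator_apply, Derivation.smul_apply, Dder_X, Hder_X, Derivation.map_smul,
    Derivation.map_smul, Hder_X, Dder_X, smul_smul, smul_smul, ← sub_smul,
    ← Nat.cast_smul_eq_nsmul ℚ, smul_smul]
  congr 1
  linear_combination (-2 : ℚ) * Fin.val_mul_val_sub_one (R := ℚ) s

theorem Dop_mul_Δop_sub_Δop_mul_Dop : Dop n * Δop n - Δop n * Dop n = Hder n := by
  rw [← coe_Dder, ← coe_Δder, ← Ring.lie_def, ← Derivation.commutator_coe_linear_map,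
    commutator_Dder_Δder]

theorem Hder_mul_Dop :
    (Hder n : Module.End ℚ (CoeffRing n)) * Dop n = Dop n * Hder n + 2 • Dop n := by
  rw [← sub_eq_iff_eq_add', ← coe_Dder, ← Ring.lie_def, ← Derivation.commutator_coe_linear_map,
    commutator_Hder_Dder, Derivation.coe_smul_linearMap]

end Derivations

theorem hilbert_second_identity_general (n k m : ℕ)
    (l : Fin k → ℕ)
    (hle : ∀ j, l j ≤ n) (hsum : ∑ j, l j = m)
    (aLam : MvPolynomial (Fin (n+1)) ℚ)
    (haLam : aLam = ∏ j : Fin k, X (⟨l j, Nat.lt_succ_of_le (hle j)⟩ : Fin (n+1)))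
    (i : ℕ) (hi : 1 ≤ i) :
    (Dop n ^ i) (Δop n aLam) - Δop n ((Dop n ^ i) aLam) =
      (((i : ℤ) * (((n : ℤ) * k - 2 * m) + i - 1) : ℤ) : ℚ) • (Dop n ^ (i - 1)) aLam := by
  have hweight : Hder n aLam = ((n : ℚ) * k - 2 * m) • aLam := by
    rw [haLam, Hder_prod_X]
    congr 1
    simp only [Finset.sum_sub_distrib, Finset.sum_const, Finset.card_univ, Fintype.card_fin,
      nsmul_eq_mul, ← Finset.mul_sum, ← hsum, Nat.cast_sum]
    ring
  obtain ⟨i, rfl⟩ := Nat.exists_eq_add_of_le' hi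
  rw [Module.End.pow_succ_apply_sub_apply_pow_succ Dop_mul_Δop_sub_Δop_mul_Dop Hder_mul_Dop
    hweight, Nat.add_sub_cancel]
  congr 1
  push_cast
  ring

/-- Hilbert's second identity
`D^i Δ (a_λ) - Δ D^i (a_λ) = i (c + i - 1) D^{i-1} (a_λ)` with `c = nk - 2m`. -/
theorem hilbert_second_identity (n k m : ℕ) (hm : m ≤ n * k)
    (l : Fin k → ℕ) (hanti : ∀ j j' : Fin k, j ≤ j' → l j' ≤ l j)
    (hle : ∀ j, l j ≤ n) (hsum : ∑ j, l j = m)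
    (aLam : MvPolynomial (Fin (n+1)) ℚ)
    (haLam : aLam = ∏ j : Fin k, X (⟨l j, Nat.lt_succ_of_le (hle j)⟩ : Fin (n+1)))
    (i : ℕ) (hi : 1 ≤ i) :
    (Dop n ^ i) (Δop n aLam) - Δop n ((Dop n ^ i) aLam) =
      (((i : ℤ) * (((n : ℤ) * k - 2 * m) + i - 1) : ℤ) : ℚ) • (Dop n ^ (i - 1)) aLam :=
  hilbert_second_identity_general n k m l hle hsum aLam haLam i hi
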